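/- arXiv:1209.3813 — 3 statements merged into one kernel-verified Lean document; each statement's English description precedes it below -/
import Mathlib

section
/- Fix K ∈ ℝ, real N > 1 and R > 0 with K·R² < (N−1)·π². Then the function r ↦ φ_{K,N}(r,R) is twice differentiable on (0,R) with (d²/dr²) φ_{K,N}(r,R) = 1 + (N−1)·(s'_{K,N}(r)/s_{K,N}(r))·∫_r^R (s_{K,N}(η)/s_{K,N}(r))^{N−1} dη, where s'_{K,N} denotes the derivative of s_{K,N}. -/
open Real intervalIntegral

/-- The comparison function `s_{K,N}`. -/
noncomputable def sKN (K N θ : ℝ) : ℝ :=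
  if 0 < K then Real.sqrt ((N - 1) / K) * Real.sin (θ * Real.sqrt (K / (N - 1)))
  else if K = 0 then θ
  else Real.sqrt ((N - 1) / (-K)) * Real.sinh (θ * Real.sqrt (-K / (N - 1)))

/-- `φ_{K,N}(r,R) = ∫∫_{r ≤ ξ ≤ η ≤ R} (s_{K,N}(η)/s_{K,N}(ξ))^{N−1} dη dξ`. -/
noncomputable def phiKN (K N r R : ℝ) : ℝ :=
  ∫ ξ in r..R, ∫ η in ξ..R, (sKN K N η / sKN K N ξ) ^ (N - 1)

/-!
On any open interval `U ∋ R` where `s > 0`, the inner integral factors as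
`g(ξ) = s(ξ)^{-p} ∫_ξ^R s^p`. Differentiating this product with the fundamental theorem of
calculus gives `g' = -1 - p (s'/s) g`, while `φ(r) = ∫_r^R g` has `φ' = -g`; so `φ'' = -g'`.
For `s = s_{K,N}` such an interval is `{θ > 0 | K θ² < (N-1) π²}`.
-/

section InnerIntegral

variable {s f : ℝ → ℝ} {U : Set ℝ} {R p x : ℝ}

theorem hasDerivAt_integral_left_of_continuousOn (hU : IsOpen U) [U.OrdConnected]
    (hf : ContinuousOn f U) (hR : R ∈ U) (hx : x ∈ U) :
    HasDerivAt (fun u => ∫ η in u..R, f η) (-f x) x :=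
  integral_hasDerivAt_left ((hf.mono (‹U.OrdConnected›.uIcc_subset hx hR)).intervalIntegrable)
    (hf.stronglyMeasurableAtFilter hU x hx) (hf.continuousAt (hU.mem_nhds hx))

theorem integral_div_rpow_eq_mul (hpos : ∀ y ∈ U, 0 < s y) [U.OrdConnected]
    (hR : R ∈ U) (hx : x ∈ U) :
    ∫ η in x..R, (s η / s x) ^ p = (∫ η in x..R, s η ^ p) * s x ^ (-p) := by
  rw [← integral_mul_const]
  refine integral_congr fun η hη => ?_
  have hη := hpos η (‹U.OrdConnected›.uIcc_subset hx hR hη)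
  rw [div_rpow hη.le (hpos x hx).le, rpow_neg (hpos x hx).le, div_eq_mul_inv]

theorem continuousOn_rpow_of_pos (hs : ContinuousOn s U) (hpos : ∀ y ∈ U, 0 < s y) (q : ℝ) :
    ContinuousOn (fun η => s η ^ q) U :=
  hs.rpow_const fun y hy => Or.inl (hpos y hy).ne'

variable (hU : IsOpen U) [U.OrdConnected] (hs : ContinuousOn s U) (hpos : ∀ y ∈ U, 0 < s y)
  (hR : R ∈ U)
include hU hs hpos hR

theorem continuousOn_integral_div_rpow :
    ContinuousOn (fun ξ => ∫ η in ξ..R, (s η / s ξ) ^ p) U := by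
  have hF : ContinuousOn (fun ξ => ∫ η in ξ..R, s η ^ p) U := fun ξ hξ =>
    (hasDerivAt_integral_left_of_continuousOn hU (continuousOn_rpow_of_pos hs hpos p) hR
      hξ).continuousAt.continuousWithinAt
  refine (hF.mul (continuousOn_rpow_of_pos hs hpos (-p))).congr fun ξ hξ => ?_
  exact integral_div_rpow_eq_mul hpos hR hξ

theorem hasDerivAt_integral_div_rpow {s' : ℝ} (hx : x ∈ U) (hs' : HasDerivAt s s' x) :
    HasDerivAt (fun ξ => ∫ η in ξ..R, (s η / s ξ) ^ p)
      (-(1 + p * (s' / s x) * ∫ η in x..R, (s η / s x) ^ p)) x := by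
  have hsx := hpos x hx
  have hprod := (hasDerivAt_integral_left_of_continuousOn hU
    (continuousOn_rpow_of_pos hs hpos p) hR hx).mul
    (hs'.rpow_const (p := -p) (Or.inl hsx.ne'))
  have hfactor : (fun ξ => ∫ η in ξ..R, (s η / s ξ) ^ p) =ᶠ[nhds x]
      fun ξ => (∫ η in ξ..R, s η ^ p) * s ξ ^ (-p) :=
    Filter.eventually_of_mem (hU.mem_nhds hx) fun ξ hξ => integral_div_rpow_eq_mul hpos hR hξ
  refine (hfactor.hasDerivAt_iff.mpr hprod).congr_deriv ?_
  have hcancel : s x ^ p * s x ^ (-p) = 1 := by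
    rw [rpow_neg hsx.le, mul_inv_cancel₀ (rpow_pos_of_pos hsx p).ne']
  rw [integral_div_rpow_eq_mul hpos hR hx, rpow_sub_one hsx.ne']
  field_simp
  linear_combination (-(s x)) * hcancel

theorem hasDerivAt_integral_integral_div_rpow (hx : x ∈ U) :
    HasDerivAt (fun r => ∫ ξ in r..R, ∫ η in ξ..R, (s η / s ξ) ^ p)
      (-∫ η in x..R, (s η / s x) ^ p) x :=
  hasDerivAt_integral_left_of_continuousOn hU
    (continuousOn_integral_div_rpow hU hs hpos hR) hR hx

end InnerIntegral

theorem isOpen_setOf_pos_and_mul_sq_lt (K c : ℝ) :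
    IsOpen {θ : ℝ | 0 < θ ∧ K * θ ^ 2 < c} :=
  (isOpen_lt continuous_const continuous_id).inter
    (isOpen_lt (continuous_const.mul (continuous_pow 2)) continuous_const)

instance ordConnected_setOf_pos_and_mul_sq_lt (K c : ℝ) :
    {θ : ℝ | 0 < θ ∧ K * θ ^ 2 < c}.OrdConnected := by
  refine ⟨fun a ha b hb θ hθ => ⟨ha.1.trans_le hθ.1, ?_⟩⟩
  have hθa : a ^ 2 ≤ θ ^ 2 := pow_le_pow_left₀ ha.1.le hθ.1 2
  have hθb : θ ^ 2 ≤ b ^ 2 := pow_le_pow_left₀ (ha.1.le.trans hθ.1) hθ.2 2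
  rcases le_total 0 K with hK | hK
  · exact (mul_le_mul_of_nonneg_left hθb hK).trans_lt hb.2
  · exact (mul_le_mul_of_nonpos_left hθa hK).trans_lt ha.2

theorem Ioc_subset_setOf_pos_and_mul_sq_lt {K c R : ℝ} (hc : 0 < c) (hR : K * R ^ 2 < c) :
    Set.Ioc 0 R ⊆ {θ : ℝ | 0 < θ ∧ K * θ ^ 2 < c} := by
  refine fun θ hθ => ⟨hθ.1, ?_⟩
  rcases le_total 0 K with hK | hK
  · exact (mul_le_mul_of_nonneg_left (pow_le_pow_left₀ hθ.1.le hθ.2 2) hK).trans_lt hR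
  · exact (mul_nonpos_of_nonpos_of_nonneg hK (sq_nonneg θ)).trans_lt hc

theorem sKN_differentiable (K N : ℝ) : Differentiable ℝ (sKN K N) := by
  unfold sKN; split_ifs <;> fun_prop

theorem sKN_pos {K N θ : ℝ} (hN : 1 < N) (hθ : 0 < θ)
    (hKθ : K * θ ^ 2 < (N - 1) * π ^ 2) : 0 < sKN K N θ := by
  have hN1 : 0 < N - 1 := by linarith
  unfold sKN
  split_ifs with hK hK0
  · have hc : 0 < √(K / (N - 1)) := sqrt_pos.mpr (div_pos hK hN1)
    refine mul_pos (sqrt_pos.mpr (div_pos hN1 hK)) (sin_pos_of_pos_of_lt_pi (by positivity) ?_)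
    refine lt_of_pow_lt_pow_left₀ 2 pi_pos.le ?_
    rw [mul_pow, sq_sqrt (div_pos hK hN1).le, mul_div, div_lt_iff₀ hN1]
    linarith
  · exact hθ
  · have hK' : 0 < -K := by have := lt_of_le_of_ne (not_lt.mp hK) hK0; linarith
    exact mul_pos (sqrt_pos.mpr (div_pos hN1 hK'))
      (sinh_pos_iff.mpr (mul_pos hθ (sqrt_pos.mpr (div_pos hK' hN1))))

/-- `r ↦ φ_{K,N}(r,R)` is twice differentiable on `(0,R)`, with second derivative
`1 + (N−1)·(s'_{K,N}(r)/s_{K,N}(r))·∫_r^R (s_{K,N}(η)/s_{K,N}(r))^{N−1} dη`. -/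
theorem phiKN_second_deriv (K N R : ℝ) (hN : 1 < N) (hR : 0 < R)
    (hKR : K * R ^ 2 < (N - 1) * Real.pi ^ 2) :
    ∀ r ∈ Set.Ioo (0 : ℝ) R,
      HasDerivAt (fun r => phiKN K N r R) (deriv (fun r => phiKN K N r R) r) r ∧
      HasDerivAt (deriv (fun r => phiKN K N r R))
        (1 + (N - 1) * (deriv (sKN K N) r / sKN K N r) *
          ∫ η in r..R, (sKN K N η / sKN K N r) ^ (N - 1)) r := by
  intro r hr
  set U := {θ : ℝ | 0 < θ ∧ K * θ ^ 2 < (N - 1) * π ^ 2}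
  have hU : IsOpen U := isOpen_setOf_pos_and_mul_sq_lt _ _
  have hpos : ∀ θ ∈ U, 0 < sKN K N θ := fun θ hθ => sKN_pos hN hθ.1 hθ.2
  have hIoc : Set.Ioc 0 R ⊆ U :=
    Ioc_subset_setOf_pos_and_mul_sq_lt (mul_pos (by linarith) (by positivity)) hKR
  have hRU : R ∈ U := hIoc ⟨hR, le_rfl⟩
  have hrU : r ∈ U := hIoc (Set.Ioo_subset_Ioc_self hr)
  have hφ : ∀ x ∈ U, HasDerivAt (fun r => phiKN K N r R)
      (-∫ η in x..R, (sKN K N η / sKN K N x) ^ (N - 1)) x := fun x hx =>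
    hasDerivAt_integral_integral_div_rpow hU (sKN_differentiable K N).continuous.continuousOn
      hpos hRU hx
  refine ⟨(hφ r hrU).differentiableAt.hasDerivAt, ?_⟩
  have hφ' : deriv (fun r => phiKN K N r R) =ᶠ[nhds r]
      fun x => -∫ η in x..R, (sKN K N η / sKN K N x) ^ (N - 1) :=
    Filter.eventually_of_mem (hU.mem_nhds hrU) fun x hx => (hφ x hx).deriv
  refine hφ'.hasDerivAt_iff.mpr ?_
  simpa using (hasDerivAt_integral_div_rpow hU (sKN_differentiable K N).continuous.continuousOn
    hpos hRU hrU (sKN_differentiable K N r).hasDerivAt).fun_neg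
end

section
/- For every K ≤ 0, real N > 1 and 0 < r ≤ R, one has the two-sided comparison φ_{0,N}(r,R) ≤ φ_{K,N}(r,R) ≤ (s_{K,N}(R)/R)^{N−1}·φ_{0,N}(r,R). -/
/-!
For `K ≤ 0` the function `s = s_{K,N}` is either `θ` or a rescaled `sinh`, so `s θ / θ` is
nondecreasing on `(0, ∞)` (convexity of `sinh` on `[0, ∞)` with `sinh 0 = 0`) and `θ ≤ s θ`.
Hence for `r ≤ ξ ≤ η ≤ R`
`η / ξ ≤ s η / s ξ = (s η / η) · (η / s ξ) ≤ (s R / R) · (η / ξ)`,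
and raising to the power `N - 1` and integrating over the triangle gives both inequalities.
-/

open Real

open Set MeasureTheory

lemma convexOn_sinh_Ici : ConvexOn ℝ (Ici 0) sinh := by
  refine MonotoneOn.convexOn_of_deriv (convex_Ici 0) continuous_sinh.continuousOn
    differentiable_sinh.differentiableOn ?_
  rw [Real.deriv_sinh, interior_Ici]
  intro x hx y hy hxy
  rw [cosh_le_cosh, abs_of_pos hx, abs_of_pos hy]
  exact hxy

lemma monotoneOn_sinh_div_self : MonotoneOn (fun x => sinh x / x) (Ioi 0) := by
  have h := convexOn_sinh_Ici.slope_mono (mem_Ici.2 le_rfl)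
  intro x hx y hy hxy
  have hx' : x ∈ Ici (0 : ℝ) \ {0} := ⟨Ioi_subset_Ici_self hx, (mem_Ioi.1 hx).ne'⟩
  have hy' : y ∈ Ici (0 : ℝ) \ {0} := ⟨Ioi_subset_Ici_self hy, (mem_Ioi.1 hy).ne'⟩
  simpa [slope_def_field] using h hx' hy' hxy

lemma sKN_zero (N θ : ℝ) : sKN 0 N θ = θ := by
  simp [sKN]

lemma sKN_of_neg {K : ℝ} (N θ : ℝ) (hK : K < 0) :
    sKN K N θ = sinh (θ * √(-K / (N - 1))) / √(-K / (N - 1)) := by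
  rw [sKN, if_neg hK.not_gt, if_neg hK.ne, ← inv_div (-K), sqrt_inv, inv_mul_eq_div]

lemma continuous_sKN (K N : ℝ) : Continuous (sKN K N) := by
  unfold sKN
  split_ifs <;> fun_prop

section Nonpositive

variable {K N : ℝ}

lemma monotoneOn_sKN_div_self (hK : K ≤ 0) (hN : 1 < N) :
    MonotoneOn (fun θ => sKN K N θ / θ) (Ioi 0) := by
  rcases hK.lt_or_eq with hK | rfl
  · set a := √(-K / (N - 1))
    have ha : 0 < a := sqrt_pos.2 (div_pos (neg_pos.2 hK) (sub_pos.2 hN))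
    have hscale : ∀ θ, sKN K N θ / θ = sinh (θ * a) / (θ * a) := fun θ => by
      rw [sKN_of_neg N θ hK, div_div, mul_comm a]
    intro x hx y hy hxy
    simp only [hscale]
    exact monotoneOn_sinh_div_self (mul_pos hx ha) (mul_pos hy ha)
      (mul_le_mul_of_nonneg_right hxy ha.le)
  · intro x hx y hy _
    simp only [sKN_zero, div_self (mem_Ioi.1 hx).ne', div_self (mem_Ioi.1 hy).ne', le_rfl]

lemma self_le_sKN (hK : K ≤ 0) (hN : 1 < N) {θ : ℝ} (hθ : 0 ≤ θ) : θ ≤ sKN K N θ := by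
  rcases hK.lt_or_eq with hK | rfl
  · set a := √(-K / (N - 1))
    have ha : 0 < a := sqrt_pos.2 (div_pos (neg_pos.2 hK) (sub_pos.2 hN))
    rw [sKN_of_neg N _ hK, le_div_iff₀ ha]
    exact self_le_sinh_iff.2 (mul_nonneg hθ ha.le)
  · exact (sKN_zero N θ).ge

lemma div_le_sKN_div (hK : K ≤ 0) (hN : 1 < N) {ξ η : ℝ} (hξ : 0 < ξ) (hξη : ξ ≤ η) :
    η / ξ ≤ sKN K N η / sKN K N ξ := by
  have hη := hξ.trans_le hξη
  have hsξ := hξ.trans_le (self_le_sKN hK hN hξ.le)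
  have h := monotoneOn_sKN_div_self hK hN hξ hη hξη
  rw [div_le_div_iff₀ hξ hη] at h
  rw [div_le_div_iff₀ hξ hsξ]
  linarith

lemma sKN_div_le (hK : K ≤ 0) (hN : 1 < N) {ξ η R : ℝ} (hξ : 0 < ξ) (hξη : ξ ≤ η)
    (hηR : η ≤ R) : sKN K N η / sKN K N ξ ≤ sKN K N R / R * (η / ξ) := by
  have hη := hξ.trans_le hξη
  have hR := hη.trans_le hηR
  have hsξ := hξ.trans_le (self_le_sKN hK hN hξ.le)
  calc sKN K N η / sKN K N ξ = sKN K N η / η * (η / sKN K N ξ) := by field_simp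
    _ ≤ sKN K N R / R * (η / ξ) :=
      mul_le_mul (monotoneOn_sKN_div_self hK hN hη hR hηR)
        (div_le_div_of_nonneg_left hη.le hξ (self_le_sKN hK hN hξ.le)) (div_pos hη hsξ).le
        (div_nonneg (hR.le.trans (self_le_sKN hK hN hR.le)) hR.le)

end Nonpositive

section TriangleIntegral

variable {s t : ℝ → ℝ} {r R : ℝ}

lemma intervalIntegrable_integral_rpow_div (p : ℝ) (hrR : r ≤ R) (hs : ContinuousOn s (Icc r R))
    (hs0 : ∀ x ∈ Icc r R, 0 < s x) :
    IntervalIntegrable (fun ξ => ∫ η in ξ..R, (s η / s ξ) ^ p) volume r R := by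
  have hsp : ContinuousOn (fun x => s x ^ p) (Icc r R) :=
    hs.rpow_const fun x hx => Or.inl (hs0 x hx).ne'
  have hprim : ContinuousOn (fun ξ => ∫ η in ξ..R, s η ^ p) (Icc r R) := by
    rw [← uIcc_of_le hrR] at hsp ⊢
    exact intervalIntegral.continuousOn_primitive_interval_left hsp.integrableOn_uIcc
  have hfactor : EqOn (fun ξ => ∫ η in ξ..R, (s η / s ξ) ^ p)
      (fun ξ => (∫ η in ξ..R, s η ^ p) / s ξ ^ p) (Icc r R) := by
    intro ξ hξ
    dsimp only
    rw [← intervalIntegral.integral_div]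
    refine intervalIntegral.integral_congr fun η hη => ?_
    rw [uIcc_of_le hξ.2] at hη
    exact div_rpow (hs0 η ⟨hξ.1.trans hη.1, hη.2⟩).le (hs0 ξ hξ).le p
  -- `ξ` enters both as a limit and in the integrand; after `hfactor` only a primitive remains.
  refine ContinuousOn.intervalIntegrable ?_
  rw [uIcc_of_le hrR]
  exact (hprim.div hsp fun x hx => (rpow_pos_of_pos (hs0 x hx) p).ne').congr hfactor

lemma integral_integral_rpow_div_le {p c : ℝ} (hrR : r ≤ R) (hp : 0 ≤ p) (hc : 0 ≤ c)
    (hs : ContinuousOn s (Icc r R)) (ht : ContinuousOn t (Icc r R))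
    (hs0 : ∀ x ∈ Icc r R, 0 < s x) (ht0 : ∀ x ∈ Icc r R, 0 < t x)
    (hst : ∀ ξ η, r ≤ ξ → ξ ≤ η → η ≤ R → s η / s ξ ≤ c * (t η / t ξ)) :
    ∫ ξ in r..R, ∫ η in ξ..R, (s η / s ξ) ^ p ≤
      c ^ p * ∫ ξ in r..R, ∫ η in ξ..R, (t η / t ξ) ^ p := by
  have hinner : ∀ {u : ℝ → ℝ}, ContinuousOn u (Icc r R) → (∀ x ∈ Icc r R, 0 < u x) →
      ∀ ξ ∈ Icc r R, IntervalIntegrable (fun η => (u η / u ξ) ^ p) volume ξ R := by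
    intro u hu hu0 ξ hξ
    refine ContinuousOn.intervalIntegrable ?_
    rw [uIcc_of_le hξ.2]
    refine ((hu.div_const _).rpow_const fun _ _ => Or.inr hp).mono ?_
    exact Icc_subset_Icc_left hξ.1
  rw [← intervalIntegral.integral_const_mul]
  refine intervalIntegral.integral_mono_on hrR (intervalIntegrable_integral_rpow_div p hrR hs hs0)
    ((intervalIntegrable_integral_rpow_div p hrR ht ht0).const_mul _) fun ξ hξ => ?_
  rw [← intervalIntegral.integral_const_mul]
  refine intervalIntegral.integral_mono_on hξ.2 (hinner hs hs0 ξ hξ)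
    ((hinner ht ht0 ξ hξ).const_mul _) fun η hη => ?_
  have hη' : η ∈ Icc r R := ⟨hξ.1.trans hη.1, hη.2⟩
  calc (s η / s ξ) ^ p ≤ (c * (t η / t ξ)) ^ p :=
        rpow_le_rpow (div_pos (hs0 η hη') (hs0 ξ hξ)).le (hst ξ η hξ.1 hη.1 hη.2) hp
    _ = c ^ p * (t η / t ξ) ^ p := mul_rpow hc (div_pos (ht0 η hη') (ht0 ξ hξ)).le

end TriangleIntegral

/-- For `K ≤ 0` and `0 < r ≤ R`:
`φ_{0,N}(r,R) ≤ φ_{K,N}(r,R) ≤ (s_{K,N}(R)/R)^{N−1}·φ_{0,N}(r,R)`. -/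
theorem phiKN_comparison (K N r R : ℝ) (hK : K ≤ 0) (hN : 1 < N)
    (hr : 0 < r) (hrR : r ≤ R) :
    phiKN 0 N r R ≤ phiKN K N r R ∧
    phiKN K N r R ≤ (sKN K N R / R) ^ (N - 1) * phiKN 0 N r R := by
  have hp : 0 ≤ N - 1 := by linarith
  have hid0 : ∀ x ∈ Icc r R, 0 < x := fun x hx => hr.trans_le hx.1
  have hs0 : ∀ x ∈ Icc r R, 0 < sKN K N x := fun x hx =>
    (hid0 x hx).trans_le (self_le_sKN hK hN (hid0 x hx).le)
  have hphi0 : phiKN 0 N r R = ∫ ξ in r..R, ∫ η in ξ..R, (η / ξ) ^ (N - 1) := by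
    simp only [phiKN, sKN_zero]
  rw [hphi0, phiKN]
  have hR : 0 < R := hr.trans_le hrR
  constructor
  · have hlower := integral_integral_rpow_div_le (s := fun x => x) hrR hp zero_le_one
      continuousOn_id (continuous_sKN K N).continuousOn hid0 hs0
      fun ξ η hξ hξη _ => by rw [one_mul]; exact div_le_sKN_div hK hN (hr.trans_le hξ) hξη
    rwa [one_rpow, one_mul] at hlower
  · exact integral_integral_rpow_div_le hrR hp
      (div_nonneg (hR.le.trans (self_le_sKN hK hN hR.le)) hR.le)
      (continuous_sKN K N).continuousOn continuousOn_id hs0 hid0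
      fun ξ η hξ hξη hηR => sKN_div_le hK hN (hr.trans_le hξ) hξη hηR
end

section
/- Let D > 0 and h > 0, and define Φ : (0,h] → ℝ by Φ(θ) = 2θ + 2D·h²·log(h/θ) − D·(h² − θ²) (equivalently, Φ(θ) = 2θ + 4D·φ_{0,2}(θ,h)). Then Φ is convex on (0,h], it attains its minimum over (0,h] at θ₀ = (√(1 + 4D²h²) − 1)/(2D), which lies in (0,h), and the minimum value equals 2D·h²·( 1/(1 + √(1 + 4D²h²)) + log( (1 + √(1 + 4D²h²))/(2Dh) ) ). -/
/-!
Away from `θ = 0` the function is `Dθ² + 2θ − 2Dh² log θ` plus a constant, a sum of convex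
functions. Its critical point `θ₀` is the positive root of `Dθ² + θ = Dh²`, and the tangent
line bound `log x ≤ x − 1` at `x = θ/θ₀` turns this relation into
`Φ(θ₀) + D(θ − θ₀)² ≤ Φ(θ)`. At the root, `Φ(θ₀) = θ₀ + 2Dh² log(h/θ₀)`, and rationalising
`θ₀ = (√(1 + 4D²h²) − 1)/(2D) = 2Dh²/(1 + √(1 + 4D²h²))` gives the closed form.
-/

open Real Set

noncomputable section

namespace PhiMin

variable {D h θ t : ℝ}

def phi (D h θ : ℝ) : ℝ := 2 * θ + 2 * D * h ^ 2 * log (h / θ) - D * (h ^ 2 - θ ^ 2)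

def theta0 (D h : ℝ) : ℝ := (√(1 + 4 * D ^ 2 * h ^ 2) - 1) / (2 * D)

lemma phi_eq_of_pos (hh : h ≠ 0) (hθ : 0 < θ) :
    phi D h θ = D * θ ^ 2 + 2 * θ + 2 * D * h ^ 2 * -log θ + D * h ^ 2 * (2 * log h - 1) := by
  rw [phi, log_div hh hθ.ne']
  ring

lemma convexOn_phi (hD : 0 ≤ D) (hh : h ≠ 0) : ConvexOn ℝ (Ioi 0) (phi D h) := by
  have hsq : ConvexOn ℝ (Ioi 0) fun θ : ℝ => D * θ ^ 2 :=
    ((even_two.convexOn_pow).subset (subset_univ _) (convex_Ioi 0)).smul hD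
  have hlin : ConvexOn ℝ (Ioi 0) fun θ : ℝ => 2 * θ :=
    (convexOn_id (convex_Ioi (0 : ℝ))).smul zero_le_two
  have hlog : ConvexOn ℝ (Ioi 0) fun θ : ℝ => 2 * D * h ^ 2 * -log θ :=
    strictConcaveOn_log_Ioi.concaveOn.neg.smul (by positivity)
  exact (((hsq.add hlin).add hlog).add_const (D * h ^ 2 * (2 * log h - 1))).congr
    fun θ hθ => (phi_eq_of_pos hh hθ).symm

lemma phi_add_sq_le_of_root (hD : 0 ≤ D) (ht : 0 < t) (hroot : D * t ^ 2 + t = D * h ^ 2)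
    (hθ : 0 < θ) : phi D h t + D * (θ - t) ^ 2 ≤ phi D h θ := by
  have hh : h ≠ 0 := by
    rintro rfl
    nlinarith
  have hlog : log (h / t) - log (h / θ) ≤ θ / t - 1 := by
    rw [log_div hh ht.ne', log_div hh hθ.ne', sub_sub_sub_cancel_left, ← log_div hθ.ne' ht.ne']
    exact log_le_sub_one_of_pos (div_pos hθ ht)
  have htangent : 2 * D * h ^ 2 * (θ / t - 1) = (2 * D * t + 2) * (θ - t) := by
    rw [show 2 * D * h ^ 2 = 2 * (D * t ^ 2 + t) by rw [hroot]; ring]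
    field_simp
  have hscaled := mul_le_mul_of_nonneg_left hlog (by positivity : 0 ≤ 2 * D * h ^ 2)
  unfold phi
  linarith

lemma phi_of_root (hroot : D * t ^ 2 + t = D * h ^ 2) :
    phi D h t = t + 2 * D * h ^ 2 * log (h / t) := by
  unfold phi
  linarith

lemma two_mul_mul_lt_sqrt (hD : 0 ≤ D) (hh : 0 ≤ h) : 2 * D * h < √(1 + 4 * D ^ 2 * h ^ 2) := by
  rw [lt_sqrt (by positivity)]
  linarith

lemma theta0_eq (hD : 0 < D) :
    theta0 D h = 2 * D * h ^ 2 / (1 + √(1 + 4 * D ^ 2 * h ^ 2)) := by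
  have hs := sq_sqrt (by positivity : (0 : ℝ) ≤ 1 + 4 * D ^ 2 * h ^ 2)
  have hs0 := sqrt_nonneg (1 + 4 * D ^ 2 * h ^ 2)
  rw [theta0]
  generalize √(1 + 4 * D ^ 2 * h ^ 2) = s at hs hs0 ⊢
  rw [div_eq_div_iff (by positivity) (by positivity)]
  linear_combination hs

lemma theta0_root (hD : 0 < D) : D * theta0 D h ^ 2 + theta0 D h = D * h ^ 2 := by
  have hs := sq_sqrt (by positivity : (0 : ℝ) ≤ 1 + 4 * D ^ 2 * h ^ 2)
  rw [theta0]
  generalize √(1 + 4 * D ^ 2 * h ^ 2) = s at hs ⊢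
  field_simp
  linear_combination hs

lemma theta0_mem_Ioo (hD : 0 < D) (hh : 0 < h) : theta0 D h ∈ Ioo 0 h := by
  rw [theta0_eq hD]
  refine ⟨by positivity, ?_⟩
  rw [div_lt_iff₀ (by positivity)]
  nlinarith [mul_lt_mul_of_pos_left (two_mul_mul_lt_sqrt hD.le hh.le) hh]

end PhiMin

open PhiMin in
/-- Properties of `Φ(θ) = 2θ + 2D·h²·log(h/θ) − D·(h² − θ²)` (the case `N = 2`):
convexity on `(0,h]`, minimality at `θ₀ = (√(1 + 4D²h²) − 1)/(2D) ∈ (0,h)`, and the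
explicit value of the minimum
`Φ(θ₀) = 2D·h²·(1/(1 + √(1 + 4D²h²)) + log((1 + √(1 + 4D²h²))/(2Dh)))`. -/
theorem phi_min_eq_two (D h : ℝ) (hD : 0 < D) (hh : 0 < h) :
    let Φ : ℝ → ℝ := fun θ =>
      2 * θ + 2 * D * h ^ 2 * Real.log (h / θ) - D * (h ^ 2 - θ ^ 2)
    let θ₀ : ℝ := (Real.sqrt (1 + 4 * D ^ 2 * h ^ 2) - 1) / (2 * D)
    ConvexOn ℝ (Set.Ioc 0 h) Φ ∧
    θ₀ ∈ Set.Ioo (0 : ℝ) h ∧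
    (∀ θ ∈ Set.Ioc (0 : ℝ) h, Φ θ₀ ≤ Φ θ) ∧
    Φ θ₀ = 2 * D * h ^ 2 * (1 / (1 + Real.sqrt (1 + 4 * D ^ 2 * h ^ 2)) +
      Real.log ((1 + Real.sqrt (1 + 4 * D ^ 2 * h ^ 2)) / (2 * D * h))) := by
  show ConvexOn ℝ (Ioc 0 h) (phi D h) ∧ theta0 D h ∈ Ioo 0 h ∧
    (∀ θ ∈ Ioc 0 h, phi D h (theta0 D h) ≤ phi D h θ) ∧ _
  have hroot := theta0_root (h := h) hD
  have hθ₀ := theta0_mem_Ioo hD hh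
  refine ⟨(convexOn_phi hD.le hh.ne').subset Ioc_subset_Ioi_self (convex_Ioc 0 h), hθ₀,
    fun θ hθ => ?_, ?_⟩
  · exact le_of_add_le_of_nonneg_left (phi_add_sq_le_of_root hD.le hθ₀.1 hroot hθ.1)
      (by positivity)
  · show phi D h (theta0 D h) = _
    rw [phi_of_root hroot, theta0_eq hD, mul_add, mul_one_div]
    congr 2
    field_simp
end
end
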